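/- If a torsion-type tensor T is of alignment type II (all components of positive boost weight vanish relative to some null frame), then its vector part V and axial part A are not timelike: Σ_{a,b} η^{ab} V_a V_b ≥ 0 and Σ_{a,b} η_{ab} A_a A_b ≥ 0, i.e. V and A are each spacelike, null, or zero. -/

import Mathlib

/-!
In a null frame `η(x, x) = -2 x₁ x₂ + x₃² + x₄²`, which is nonnegative as soon as `x₁` or `x₂`
vanishes. Since `η` has boost weight zero, `V₁ = η^{bc} T_{b1c}` is a sum of components of boost
weight `1`; and `A₂ = T_{[134]}`, again of boost weight `1`. Type II kills both.
-/

/-- The null-frame Minkowski metric on `ℝ⁴` (indices 0,1,2,3 for 1,2,3,4). -/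
noncomputable def eta : Fin 4 → Fin 4 → ℝ := fun a b =>
  if (a = 0 ∧ b = 1) ∨ (a = 1 ∧ b = 0) then -1
  else if (a = 2 ∧ b = 2) ∨ (a = 3 ∧ b = 3) then 1 else 0

/-- The totally antisymmetric symbol with `eps 0 1 2 3 = 1`. -/
noncomputable def eps (a b c d : Fin 4) : ℝ :=
  ∑ σ : Equiv.Perm (Fin 4),
    if σ 0 = a ∧ σ 1 = b ∧ σ 2 = c ∧ σ 3 = d then ((Equiv.Perm.sign σ : ℤ) : ℝ) else 0

/-- Membership in the space `W` of purely tensorial parts of torsion. -/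
def InW (t : Fin 4 → Fin 4 → Fin 4 → ℝ) : Prop :=
  (∀ a b c, t a b c = t b a c) ∧
  (∀ c, ∑ a, ∑ b, eta a b * t a b c = 0) ∧
  (∀ a b c, t a b c + t b c a + t c a b = 0)

/-- The decomposition formula `T_{abc} = (2/3)(t_{abc} − t_{acb}) − (1/3)(η_{ab}V_c − η_{ac}V_b)
  + Σ_d ε_{abcd} A_d`. -/
noncomputable def decomp (V A : Fin 4 → ℝ) (t : Fin 4 → Fin 4 → Fin 4 → ℝ) (a b c : Fin 4) : ℝ :=
  (2/3) * (t a b c - t a c b) - (1/3) * (eta a b * V c - eta a c * V b) + ∑ d, eps a b c d * A d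


/-- The boost weight of a single index: `+1` for frame index 1 (here 0), `−1` for frame index 2
(here 1), `0` otherwise. -/
def bwIdx (a : Fin 4) : ℤ := if a = 0 then 1 else if a = 1 then -1 else 0

/-- The boost weight of a rank-3 component. -/
def bw3 (a b c : Fin 4) : ℤ := bwIdx a + bwIdx b + bwIdx c

lemma sum_eta_mul_mul (x : Fin 4 → ℝ) :
    ∑ a, ∑ b, eta a b * x a * x b = -2 * x 0 * x 1 + x 2 ^ 2 + x 3 ^ 2 := by
  simp only [eta, Fin.isValue, ite_mul, neg_mul, one_mul, zero_mul, Fin.sum_univ_four,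
    zero_ne_one, and_false, and_true, false_or, Fin.reduceEq, or_self, ↓reduceIte, one_ne_zero,
    or_false, zero_add, add_zero]
  ring

lemma sum_eta_mul_mul_nonneg {x : Fin 4 → ℝ} (hx : x 0 = 0 ∨ x 1 = 0) :
    0 ≤ ∑ a, ∑ b, eta a b * x a * x b := by
  rw [sum_eta_mul_mul]
  rcases hx with hx | hx <;> simp only [hx] <;> nlinarith [sq_nonneg (x 2), sq_nonneg (x 3)]

lemma bwIdx_add_eq_zero_of_eta_ne_zero {a b : Fin 4} (h : eta a b ≠ 0) :
    bwIdx a + bwIdx b = 0 := by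
  fin_cases a <;> fin_cases b <;> simp_all [eta, bwIdx]

lemma eps_apply_perm (σ : Equiv.Perm (Fin 4)) :
    eps (σ 0) (σ 1) (σ 2) (σ 3) = Equiv.Perm.sign σ := by
  unfold eps
  rw [Finset.sum_eq_single σ]
  · simp
  · intro τ _ hτ
    rw [if_neg]
    rintro ⟨h0, h1, h2, h3⟩
    exact hτ (by ext i; fin_cases i <;> simp [h0, h1, h2, h3])
  · simp

lemma eps_eq_zero_of_not_injective {a b c d : Fin 4} (h : ¬ Function.Injective ![a, b, c, d]) :
    eps a b c d = 0 := by
  refine Finset.sum_eq_zero fun σ _ => if_neg ?_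
  rintro ⟨h0, h1, h2, h3⟩
  have hσ : ![a, b, c, d] = σ := by ext i; fin_cases i <;> simp [h0, h1, h2, h3]
  exact h (hσ ▸ σ.injective)

lemma sum_eps_zero_two_three_mul (A : Fin 4 → ℝ) : ∑ d, eps 0 2 3 d * A d = A 1 := by
  have h1 : eps 0 2 3 1 = 1 := by
    have h := eps_apply_perm (Equiv.swap 1 2 * Equiv.swap 2 3)
    rwa [show Equiv.Perm.sign (Equiv.swap (1 : Fin 4) 2 * Equiv.swap 2 3) = 1 by decide,
      Units.val_one, Int.cast_one] at h
  rw [Fin.sum_univ_four, h1, eps_eq_zero_of_not_injective (by decide),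
    eps_eq_zero_of_not_injective (by decide), eps_eq_zero_of_not_injective (by decide)]
  ring

section TypeII

variable {T : Fin 4 → Fin 4 → Fin 4 → ℝ}

lemma sum_eta_mul_apply_zero_eq_zero (hII : ∀ a b c, 0 < bw3 a b c → T a b c = 0) :
    ∑ b, ∑ c, eta b c * T b 0 c = 0 := by
  refine Finset.sum_eq_zero fun b _ => Finset.sum_eq_zero fun c _ => ?_
  by_cases h : eta b c = 0
  · rw [h, zero_mul]
  · have hbc := bwIdx_add_eq_zero_of_eta_ne_zero h
    rw [hII b 0 c (by simp [bw3, bwIdx] at hbc ⊢; omega), mul_zero]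

lemma axial_apply_one_eq_zero (hII : ∀ a b c, 0 < bw3 a b c → T a b c = 0) {A : Fin 4 → ℝ}
    (hA : (∑ d, eps 0 2 3 d * A d) =
      (1/6) * (T 0 2 3 + T 2 3 0 + T 3 0 2 - T 0 3 2 - T 2 0 3 - T 3 2 0)) :
    A 1 = 0 := by
  rw [sum_eps_zero_two_three_mul, hII 0 2 3 (by decide), hII 2 3 0 (by decide),
    hII 3 0 2 (by decide), hII 0 3 2 (by decide), hII 2 0 3 (by decide),
    hII 3 2 0 (by decide)] at hA
  simpa using hA

end TypeII

theorem typeII_vector_axial_not_timelike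
    (T : Fin 4 → Fin 4 → Fin 4 → ℝ)
    (hII : ∀ a b c, 0 < bw3 a b c → T a b c = 0)
    (V : Fin 4 → ℝ) (hV : ∀ a, V a = ∑ b, ∑ c, eta b c * T b a c)
    (A : Fin 4 → ℝ)
    (hA : ∀ a b c, (∑ d, eps a b c d * A d) =
      (1/6) * (T a b c + T b c a + T c a b - T a c b - T b a c - T c b a)) :
    0 ≤ (∑ a, ∑ b, eta a b * V a * V b) ∧ 0 ≤ (∑ a, ∑ b, eta a b * A a * A b) := by
  have hV0 : V 0 = 0 := (hV 0).trans (sum_eta_mul_apply_zero_eq_zero hII)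
  have hA1 : A 1 = 0 := axial_apply_one_eq_zero hII (hA 0 2 3)
  exact ⟨sum_eta_mul_mul_nonneg (Or.inl hV0), sum_eta_mul_mul_nonneg (Or.inr hA1)⟩
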